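/- For every irreducible representation α of S(n−2k) and every irreducible representation μ of S(n−k) with m_α, m_μ ≠ 0 and μ ∈ α: tr_{(k)}(F_μ(α)) = m_{μ/α}·(m_α/m_μ)·P_μ, where tr_{(k)} is the partial trace over factors n−2k+1,…,n−k and P_μ is the Young projector of μ acting on the first n−k factors. Consequently the full trace is tr(F_μ(α)) = m_{μ/α}·m_α·d_μ. -/

import Mathlib

open scoped BigOperators
open scoped Classical
open scoped ComplexOrder
open Matrix

noncomputable section

/-- Square matrices on the computational basis of `(ℂ^d)^{⊗ n}`. -/
abbrev Mat (d n : ℕ) := Matrix (Fin n → Fin d) (Fin n → Fin d) ℂ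

/-- The unitary permuting the tensor factors according to `σ`. -/
def Vperm (d n : ℕ) (σ : Equiv.Perm (Fin n)) : Mat d n :=
  Matrix.of fun f g => if f ∘ σ = g then (1 : ℂ) else 0

/-- Orthogonal projector onto the maximally entangled state of factors `r` and `s`,
tensored with the identity on the remaining factors. -/
def Pplus (d n : ℕ) (r s : Fin n) : Mat d n :=
  Matrix.of fun f g =>
    if f r = f s ∧ g r = g s ∧ ∀ t : Fin n, t ≠ r → t ≠ s → f t = g t
    then (1 : ℂ) / d else 0

/-- `V^{(k)} = d^k · P⁺_{n-2k+1,n} ⋯ P⁺_{n-k,n-k+1}` on `n = a + 2k` factors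
(`a = n - 2k`), tensored with the identity on the remaining factors. -/
def Vk (d a k : ℕ) : Mat d (a + k + k) :=
  ((d : ℂ) ^ k) •
    ((List.finRange k).map fun j : Fin k =>
      Pplus d (a + k + k) ⟨a + (j : ℕ), by have := j.isLt; omega⟩
        ⟨a + k + k - 1 - (j : ℕ), by have := j.isLt; omega⟩).prod

/-- Extension of an operator on the first `m` factors by the identity on the rest. -/
def extOp {d m n : ℕ} (h : m ≤ n) (X : Mat d m) : Mat d n :=
  Matrix.of fun f g =>
    if ∀ i : Fin n, m ≤ (i : ℕ) → f i = g i
    then X (fun i => f (Fin.castLE h i)) (fun i => g (Fin.castLE h i)) else 0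

def splice {d a b : ℕ} (f : Fin a → Fin d) (t : Fin b → Fin d) : Fin (a + b) → Fin d :=
  fun i => if h : (i : ℕ) < a then f ⟨i, h⟩ else t ⟨(i : ℕ) - a, by have := i.isLt; omega⟩

/-- Partial trace over the last `b` tensor factors. -/
def ptraceLast {d : ℕ} (a b : ℕ) (X : Mat d (a + b)) : Mat d a :=
  Matrix.of fun f g => ∑ t : Fin b → Fin d, X (splice f t) (splice g t)

def finLtEquiv {m n : ℕ} (h : m ≤ n) : Fin m ≃ {i : Fin n // (i : ℕ) < m} where
  toFun i := ⟨⟨(i : ℕ), lt_of_lt_of_le i.isLt h⟩, i.isLt⟩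
  invFun j := ⟨(j.1 : ℕ), j.2⟩
  left_inv i := rfl
  right_inv j := rfl

/-- The embedding of `S(m)` into `S(n)`, acting on the first `m` letters. -/
def permExt {m n : ℕ} (h : m ≤ n) (σ : Equiv.Perm (Fin m)) : Equiv.Perm (Fin n) :=
  σ.extendDomain (finLtEquiv h)

/-- A unitary irreducible matrix representation (Schur's criterion). -/
def IsUnitaryIrrep {G : Type*} [Group G] {e : ℕ}
    (φ : G →* Matrix (Fin e) (Fin e) ℂ) : Prop :=
  (∀ g, (φ g)ᴴ * φ g = 1) ∧
  ∀ X : Matrix (Fin e) (Fin e) ℂ, (∀ g, X * φ g = φ g * X) →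
    ∃ c : ℂ, X = c • (1 : Matrix (Fin e) (Fin e) ℂ)

/-- Operator basis `E^μ_{ij} = (d_μ/m!) Σ_τ φ^μ_{ji}(τ⁻¹) V_τ` on the first `m` factors. -/
def Eop (d m : ℕ) {e : ℕ} (φ : Equiv.Perm (Fin m) →* Matrix (Fin e) (Fin e) ℂ)
    (i j : Fin e) : Mat d m :=
  ((e : ℂ) / (Nat.factorial m : ℂ)) •
    ∑ τ : Equiv.Perm (Fin m), φ τ⁻¹ j i • Vperm d m τ

/-- Young projector `P_μ = Σ_i E^μ_{ii}`. -/
def Pop (d m : ℕ) {e : ℕ} (φ : Equiv.Perm (Fin m) →* Matrix (Fin e) (Fin e) ℂ) : Mat d m :=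
  ∑ i : Fin e, Eop d m φ i i

/-- Schur–Weyl multiplicity `m_μ = tr(P_μ)/d_μ` (a real number). -/
def multSW (d m : ℕ) {e : ℕ} (φ : Equiv.Perm (Fin m) →* Matrix (Fin e) (Fin e) ℂ) : ℝ :=
  (Matrix.trace (Pop d m φ)).re / (e : ℝ)

/-- A family of concrete unitary irreducible matrix representations of `S(a)`. -/
structure IrrepFamily (a : ℕ) where
  Label : Type
  [instFintype : Fintype Label]
  [instDecEq : DecidableEq Label]
  dim : Label → ℕ
  dim_pos : ∀ ℓ, 0 < dim ℓ
  rep : ∀ ℓ, Equiv.Perm (Fin a) →* Matrix (Fin (dim ℓ)) (Fin (dim ℓ)) ℂ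
  irrep : ∀ ℓ, IsUnitaryIrrep (rep ℓ)

attribute [instance] IrrepFamily.instFintype IrrepFamily.instDecEq

/-- An irreducible unitary representation of `S(a+k)` in PRIR form relative to the chain
`S(a+k) ⊃ ⋯ ⊃ S(a)`: the restriction to `S(a)` is block diagonal, the blocks being
indexed by branching paths, the block of every path ending at the irrep `α` of `S(a)`
being one and the same fixed matrix irrep `Φ.rep α`. -/
structure PRIRData (a k : ℕ) (Φ : IrrepFamily a) (e : ℕ) where
  rep : Equiv.Perm (Fin (a + k)) →* Matrix (Fin e) (Fin e) ℂ
  irrep : IsUnitaryIrrep rep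
  Path : Type
  [instFintypePath : Fintype Path]
  [instDecEqPath : DecidableEq Path]
  endOf : Path → Φ.Label
  basis : ((r : Path) × Fin (Φ.dim (endOf r))) ≃ Fin e
  block_diag : ∀ (h : Equiv.Perm (Fin a)) (r : Path) (l l' : Fin (Φ.dim (endOf r))),
      rep (permExt (Nat.le_add_right a k) h) (basis ⟨r, l⟩) (basis ⟨r, l'⟩)
        = Φ.rep (endOf r) h l l'
  block_off : ∀ (h : Equiv.Perm (Fin a)) (r r' : Path), r ≠ r' →
      ∀ (l : Fin (Φ.dim (endOf r))) (l' : Fin (Φ.dim (endOf r'))),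
      rep (permExt (Nat.le_add_right a k) h) (basis ⟨r, l⟩) (basis ⟨r', l'⟩) = 0

attribute [instance] PRIRData.instFintypePath PRIRData.instDecEqPath

/-- The number of paths `m_{μ/α}`, i.e. the multiplicity of `α` in the restriction. -/
def PRIRData.pathMult {a k : ℕ} {Φ : IrrepFamily a} {e : ℕ}
    (P : PRIRData a k Φ e) (α : Φ.Label) : ℕ :=
  Fintype.card {r : P.Path // P.endOf r = α}

/-- The basis operators
`F^{r_{μ/α} r_{ν/α}}_{i_μ j_ν} = (m_α/√(m_μ m_ν)) E^μ_{i_μ,(r,1_α)} V^{(k)} E^ν_{(s,1_α),j_ν}`. -/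
def Fop (d a k : ℕ) (Φ : IrrepFamily a) {e e' : ℕ}
    (P : PRIRData a k Φ e) (Q : PRIRData a k Φ e')
    (r : P.Path) (s : Q.Path) (i : Fin e) (j : Fin e') : Mat d (a + k + k) :=
  ((multSW d a (Φ.rep (P.endOf r)) /
      Real.sqrt (multSW d (a + k) P.rep * multSW d (a + k) Q.rep) : ℝ) : ℂ) •
    (extOp (Nat.le_add_right (a + k) k)
        (Eop d (a + k) P.rep i (P.basis ⟨r, ⟨0, Φ.dim_pos _⟩⟩)) *
      Vk d a k *
      extOp (Nat.le_add_right (a + k) k)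
        (Eop d (a + k) Q.rep (Q.basis ⟨s, ⟨0, Φ.dim_pos _⟩⟩) j))

/-- The projectors `F_μ(α) = Σ_{r_{μ/α}} Σ_{k_μ} F^{r r}_{k k}`. -/
def Fproj (d a k : ℕ) (Φ : IrrepFamily a) {e : ℕ}
    (P : PRIRData a k Φ e) (α : Φ.Label) : Mat d (a + k + k) :=
  ∑ r : {r : P.Path // P.endOf r = α}, ∑ i : Fin e, Fop d a k Φ P P r.1 r.1 i i

/-- Eigenvalues `λ_μ(α) = (k!·C(N,k)/d^N)·(m_μ d_α)/(m_α d_μ)` of the MPBT operator. -/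
def lambdaEig (d a k : ℕ) (Φ : IrrepFamily a) {e : ℕ}
    (P : PRIRData a k Φ e) (α : Φ.Label) : ℝ :=
  ((Nat.factorial k * Nat.choose (a + k) k : ℝ) / (d : ℝ) ^ (a + k)) *
    (multSW d (a + k) P.rep * (Φ.dim α : ℝ)) / (multSW d a (Φ.rep α) * (e : ℝ))

/-- A family of irreps of `S(a+k)` in PRIR form relative to `Φ`, one chosen
representative for each isomorphism class (pairwise non-isomorphic and complete). -/
structure PRIRFamily (a k : ℕ) (Φ : IrrepFamily a) where
  Label : Type
  [instFintype : Fintype Label]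
  [instDecEq : DecidableEq Label]
  dim : Label → ℕ
  prir : ∀ ℓ, PRIRData a k Φ (dim ℓ)
  noniso : ∀ ℓ ℓ', ℓ ≠ ℓ' → ∀ T : Matrix (Fin (dim ℓ)) (Fin (dim ℓ')) ℂ,
      (∀ σ, (prir ℓ).rep σ * T = T * (prir ℓ').rep σ) → T = 0
  complete : ∀ (e : ℕ) (ψ : Equiv.Perm (Fin (a + k)) →* Matrix (Fin e) (Fin e) ℂ),
      IsUnitaryIrrep ψ → ∃ ℓ, ∃ T : Matrix (Fin (dim ℓ)) (Fin e) ℂ,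
        ∃ T' : Matrix (Fin e) (Fin (dim ℓ)) ℂ,
          T * T' = 1 ∧ T' * T = 1 ∧ ∀ σ, (prir ℓ).rep σ * T = T * ψ σ

attribute [instance] PRIRFamily.instFintype PRIRFamily.instDecEq

/-- The signal states `σ_i` of the MPBT scheme, for a tuple `v` of (distinct) ports:
the ports are factors `0,…,a+k-1` and `B̃_j` (resp. `C_j`) is factor `a+k+j`. -/
def sigmaOp (d a k : ℕ) (v : Fin k → Fin (a + k)) : Mat d (a + k + k) :=
  ((1 : ℂ) / (d : ℂ) ^ a) •
    ((List.finRange k).map fun j : Fin k =>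
      Pplus d (a + k + k) (Fin.castLE (Nat.le_add_right (a + k) k) (v j))
        ⟨a + k + (j : ℕ), by have := j.isLt; omega⟩).prod

/-- The MPBT operator `ρ = Σ_{i ∈ I} σ_i`. -/
def rhoOp (d a k : ℕ) : Mat d (a + k + k) :=
  ∑ v : {v : Fin k → Fin (a + k) // Function.Injective v}, sigmaOp d a k v.1

/-- `P⁺_{A_i,C}`, tensored with the identity on the remaining ports. -/
def PplusTuple (d a k : ℕ) (v : Fin k → Fin (a + k)) : Mat d (a + k + k) :=
  ((List.finRange k).map fun j : Fin k =>
    Pplus d (a + k + k) (Fin.castLE (Nat.le_add_right (a + k) k) (v j))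
      ⟨a + k + (j : ℕ), by have := j.isLt; omega⟩).prod

/-- The increasing enumeration of the ports not appearing in `v`. -/
def compEnum {a k : ℕ} (v : Fin k → Fin (a + k)) (hv : Function.Injective v) :
    Fin a → Fin (a + k) := fun i =>
  (((Finset.image v Finset.univ)ᶜ.orderIsoOfFin (by
      rw [Finset.card_compl, Finset.card_image_of_injective _ hv, Finset.card_univ,
        Fintype.card_fin, Fintype.card_fin]
      omega)) i).1

/-- Placement of an operator on the tensor factors enumerated by `w`,
tensored with the identity on the remaining factors. -/
def placeOp {d a n : ℕ} (w : Fin a → Fin n) (X : Mat d a) : Mat d n :=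
  Matrix.of fun f g =>
    if ∀ i : Fin n, (∀ j, w j ≠ i) → f i = g i
    then X (fun j => f (w j)) (fun j => g (w j)) else 0

/-- `U^{⊗N} ⊗ Ū^{⊗k}`. -/
def Upow (d N k : ℕ) (U : Matrix (Fin d) (Fin d) ℂ) : Mat d (N + k) :=
  Matrix.of fun f g =>
    ∏ i : Fin (N + k),
      if (i : ℕ) < N then U (f i) (g i) else (starRingEnd ℂ) (U (f i) (g i))

/-- A family of concrete unitary irreps of a subgroup `H ⊆ S(n)`. -/
structure SubIrrepFamily (n : ℕ) (H : Subgroup (Equiv.Perm (Fin n))) where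
  Label : Type
  [instFintype : Fintype Label]
  [instDecEq : DecidableEq Label]
  dim : Label → ℕ
  rep : ∀ ℓ, H →* Matrix (Fin (dim ℓ)) (Fin (dim ℓ)) ℂ
  irrep : ∀ ℓ, IsUnitaryIrrep (rep ℓ)

attribute [instance] SubIrrepFamily.instFintype SubIrrepFamily.instDecEq

/-- An irrep of `S(n)` whose basis is adapted to the subgroup `H` (PRIR form). -/
structure PRIRSubData (n : ℕ) (H : Subgroup (Equiv.Perm (Fin n)))
    (Ψ : SubIrrepFamily n H) (e : ℕ) where
  rep : Equiv.Perm (Fin n) →* Matrix (Fin e) (Fin e) ℂ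
  irrep : IsUnitaryIrrep rep
  Path : Type
  [instFintypePath : Fintype Path]
  [instDecEqPath : DecidableEq Path]
  endOf : Path → Ψ.Label
  basis : ((r : Path) × Fin (Ψ.dim (endOf r))) ≃ Fin e
  block_diag : ∀ (h : H) (r : Path) (l l' : Fin (Ψ.dim (endOf r))),
      rep (h : Equiv.Perm (Fin n)) (basis ⟨r, l⟩) (basis ⟨r, l'⟩) = Ψ.rep (endOf r) h l l'
  block_off : ∀ (h : H) (r r' : Path), r ≠ r' →
      ∀ (l : Fin (Ψ.dim (endOf r))) (l' : Fin (Ψ.dim (endOf r'))),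
      rep (h : Equiv.Perm (Fin n)) (basis ⟨r, l⟩) (basis ⟨r', l'⟩) = 0

attribute [instance] PRIRSubData.instFintypePath PRIRSubData.instDecEqPath

/-- A family of pairwise non-isomorphic irreps of `S(n)` in PRIR form relative to `H`. -/
structure PRIRSubFamily (n : ℕ) (H : Subgroup (Equiv.Perm (Fin n)))
    (Ψ : SubIrrepFamily n H) where
  Label : Type
  [instFintype : Fintype Label]
  [instDecEq : DecidableEq Label]
  dim : Label → ℕ
  prir : ∀ ℓ, PRIRSubData n H Ψ (dim ℓ)
  noniso : ∀ ℓ ℓ', ℓ ≠ ℓ' → ∀ T : Matrix (Fin (dim ℓ)) (Fin (dim ℓ')) ℂ,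
      (∀ σ, (prir ℓ).rep σ * T = T * (prir ℓ').rep σ) → T = 0

attribute [instance] PRIRSubFamily.instFintype PRIRSubFamily.instDecEq

end

/-!
Schur orthogonality for the unitary irrep `μ` makes the operators `E^μ_{ij}` matrix units,
`E_{ij} E_{kl} = δ_{jk} E_{il}`; in particular `P_μ` is an orthogonal projection, so
`m_μ ≥ 0` and `tr P_μ = m_μ d_μ`. The operator `V^{(k)}` is `d^k` times a product of
projectors onto maximally entangled pairs, each pair joining one of the first `n - k` factors
to one of the last `k`. Tracing out the last `k` factors turns `d · P⁺` into the identity, so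
`tr_{(k)} ((X ⊗ 1) V^{(k)} (Y ⊗ 1)) = X Y`. Hence the partial trace of `F^{r r}_{i i}` is
`(m_α/m_μ) E_{i,(r,1_α)} E_{(r,1_α),i}`, and summing over `i` gives `(m_α/m_μ) P_μ` for each of
the `m_{μ/α}` paths `r`.
-/

section SchurOrthogonality

variable {G : Type*} [Group G] {e : ℕ} {φ : G →* Matrix (Fin e) (Fin e) ℂ}

lemma IsUnitaryIrrep.map_inv (hφ : IsUnitaryIrrep φ) (g : G) : φ g⁻¹ = (φ g)ᴴ := by
  rw [← mul_one (φ g⁻¹), ← mul_eq_one_comm.mp (hφ.1 g), ← mul_assoc, ← map_mul, inv_mul_cancel,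
    map_one, one_mul]

variable [Fintype G]

lemma IsUnitaryIrrep.sum_conj (hφ : IsUnitaryIrrep φ) (M : Matrix (Fin e) (Fin e) ℂ) :
    ∑ g : G, φ g * M * φ g⁻¹ = ((Fintype.card G : ℂ) * M.trace / e) • 1 := by
  set X := ∑ g : G, φ g * M * φ g⁻¹
  have hcomm : ∀ h : G, X * φ h = φ h * X := by
    intro h
    rw [Finset.sum_mul, Finset.mul_sum]
    refine Fintype.sum_equiv (Equiv.mulLeft h⁻¹) _ _ fun g => ?_
    simp only [Equiv.coe_mulLeft, mul_assoc, ← map_mul, _root_.mul_inv_rev, inv_inv]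
    rw [← mul_assoc (φ h), ← map_mul, mul_inv_cancel_left]
  obtain ⟨c, hc⟩ := hφ.2 X hcomm
  rcases eq_or_ne e 0 with rfl | he
  · exact Subsingleton.elim _ _
  have htrace : X.trace = Fintype.card G * M.trace := by
    simp [X, Matrix.trace_sum, Matrix.trace_mul_cycle _ M, ← map_mul]
  rw [hc, Matrix.trace_smul, Matrix.trace_one, Fintype.card_fin, smul_eq_mul] at htrace
  rw [hc, ← htrace, mul_div_cancel_right₀ _ (Nat.cast_ne_zero.mpr he)]

lemma IsUnitaryIrrep.sum_apply_mul_inv_apply (hφ : IsUnitaryIrrep φ) (i k m j : Fin e) :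
    ∑ g : G, φ g m i * φ g⁻¹ k j
      = if i = k ∧ m = j then (Fintype.card G : ℂ) / e else 0 := by
  have hentry : ∀ A B : Matrix (Fin e) (Fin e) ℂ,
      (A * single i k (1 : ℂ) * B) m j = A m i * B k j := by
    intro A B
    simp [Matrix.mul_apply, Matrix.single_apply, ite_and]
  have h := congrFun (congrFun (hφ.sum_conj (Matrix.single i k 1)) m) j
  simp only [Matrix.sum_apply, hentry, Matrix.smul_apply, Matrix.one_apply, smul_eq_mul] at h
  rw [h]
  by_cases hik : i = k
  · subst hik
    by_cases hmj : m = j <;> simp [hmj, Matrix.trace_single_eq_same]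
  · simp [hik, Matrix.trace_single_eq_of_ne _ _ _ hik]

end SchurOrthogonality

lemma Vperm_mul (d n : ℕ) (σ τ : Equiv.Perm (Fin n)) :
    Vperm d n σ * Vperm d n τ = Vperm d n (σ * τ) := by
  ext f g
  rw [Matrix.mul_apply, Finset.sum_eq_single (f ∘ σ)]
  · simp only [Vperm, Matrix.of_apply, if_true, one_mul, Equiv.Perm.coe_mul]
    rfl
  · intro h _ hh
    simp [Vperm, Ne.symm hh]
  · simp

lemma Vperm_conjTranspose (d n : ℕ) (σ : Equiv.Perm (Fin n)) :
    (Vperm d n σ)ᴴ = Vperm d n σ⁻¹ := by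
  ext f g
  simp only [Matrix.conjTranspose_apply, Vperm, Matrix.of_apply, Equiv.Perm.coe_inv]
  have h : f ∘ σ.symm = g ↔ g ∘ σ = f := by rw [Equiv.comp_symm_eq, eq_comm]
  simp only [h]
  split_ifs <;> simp

section YoungOperators

variable {d m e : ℕ} {φ : Equiv.Perm (Fin m) →* Matrix (Fin e) (Fin e) ℂ}

lemma Eop_mul_Eop (hφ : IsUnitaryIrrep φ) (i j k l : Fin e) :
    Eop d m φ i j * Eop d m φ k l = if j = k then Eop d m φ i l else 0 := by
  have he : (e : ℂ) ≠ 0 := Nat.cast_ne_zero.mpr (Fin.pos i).ne'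
  have hfac : (m.factorial : ℂ) ≠ 0 := Nat.cast_ne_zero.mpr m.factorial_ne_zero
  have hcoef : ∀ ρ : Equiv.Perm (Fin m), ∑ τ, φ τ⁻¹ j i * φ (τ⁻¹ * ρ)⁻¹ l k
      = if j = k then (m.factorial / e : ℂ) * φ ρ⁻¹ l i else 0 := by
    intro ρ
    simp_rw [_root_.mul_inv_rev, inv_inv, map_mul, Matrix.mul_apply, Finset.mul_sum]
    rw [Finset.sum_comm]
    simp_rw [mul_left_comm (φ _ j i), ← Finset.mul_sum, mul_comm (φ _ j i),
      hφ.sum_apply_mul_inv_apply, Fintype.card_perm, Fintype.card_fin]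
    simp [eq_comm (a := k), ite_and, mul_comm]
  have hprod : (∑ τ, φ τ⁻¹ j i • Vperm d m τ) * (∑ σ, φ σ⁻¹ l k • Vperm d m σ)
      = ∑ ρ, (∑ τ, φ τ⁻¹ j i * φ (τ⁻¹ * ρ)⁻¹ l k) • Vperm d m ρ := by
    simp_rw [Finset.sum_mul, Finset.mul_sum, Finset.sum_smul, smul_mul_smul_comm, Vperm_mul]
    conv_rhs => rw [Finset.sum_comm]
    refine Finset.sum_congr rfl fun τ _ => ?_
    refine Fintype.sum_equiv (Equiv.mulLeft τ) _ _ fun σ => ?_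
    simp only [Equiv.coe_mulLeft, inv_mul_cancel_left]
  unfold Eop
  rw [smul_mul_smul_comm, hprod]
  simp_rw [hcoef]
  split_ifs
  · simp_rw [mul_smul, ← Finset.smul_sum, smul_smul]
    congr 1
    field_simp
  · simp

lemma Eop_conjTranspose (hφ : IsUnitaryIrrep φ) (i j : Fin e) :
    (Eop d m φ i j)ᴴ = Eop d m φ j i := by
  have hc : star ((e : ℂ) / m.factorial) = e / m.factorial := by simp
  simp only [Eop, Matrix.conjTranspose_smul, Matrix.conjTranspose_sum, Vperm_conjTranspose, hc]
  congr 1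
  refine Fintype.sum_equiv (Equiv.inv _) _ _ fun τ => ?_
  simp [hφ.map_inv τ]

lemma sum_Eop_mul_Eop (hφ : IsUnitaryIrrep φ) (l : Fin e) :
    ∑ i, Eop d m φ i l * Eop d m φ l i = Pop d m φ := by
  simp [Eop_mul_Eop hφ, Pop]

lemma Pop_mul_self (hφ : IsUnitaryIrrep φ) : Pop d m φ * Pop d m φ = Pop d m φ := by
  simp [Pop, Finset.sum_mul, Finset.mul_sum, Eop_mul_Eop hφ]

lemma Pop_posSemidef (hφ : IsUnitaryIrrep φ) : (Pop d m φ).PosSemidef := by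
  have hP : (Pop d m φ)ᴴ = Pop d m φ := by
    simp [Pop, Matrix.conjTranspose_sum, Eop_conjTranspose hφ]
  rw [← Pop_mul_self hφ]
  nth_rw 1 [← hP]
  exact Matrix.posSemidef_conjTranspose_mul_self _

lemma multSW_nonneg (hφ : IsUnitaryIrrep φ) : 0 ≤ multSW d m φ :=
  div_nonneg (Complex.nonneg_iff.mp (Pop_posSemidef hφ).trace_nonneg).1 e.cast_nonneg

lemma trace_Pop (hφ : IsUnitaryIrrep φ) : (Pop d m φ).trace = (multSW d m φ * e : ℝ) := by
  rcases eq_or_ne e 0 with rfl | he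
  · simp [Pop]
  have htr := Complex.nonneg_iff.mp (Pop_posSemidef (d := d) hφ).trace_nonneg
  rw [multSW, div_mul_cancel₀ _ (Nat.cast_ne_zero.mpr he)]
  exact Complex.ext rfl htr.2.symm

end YoungOperators

section PartialTrace

variable {d : ℕ}

lemma splice_eq_append {a b : ℕ} (f : Fin a → Fin d) (t : Fin b → Fin d) :
    splice f t = Fin.append f t := by
  funext i
  refine Fin.addCases (fun i => ?_) (fun j => ?_) i
  · simp [splice]
  · simp [splice]

lemma ptraceLast_apply {a b : ℕ} (X : Mat d (a + b)) (f g : Fin a → Fin d) :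
    ptraceLast a b X f g = ∑ t, X (Fin.append f t) (Fin.append g t) := by
  simp [ptraceLast, splice_eq_append]

lemma sum_fun_append {M : Type*} [AddCommMonoid M] {a b : ℕ} (F : (Fin (a + b) → Fin d) → M) :
    ∑ H, F H = ∑ h : Fin a → Fin d, ∑ t : Fin b → Fin d, F (Fin.append h t) := by
  rw [← Fintype.sum_prod_type']
  exact ((Fin.appendEquiv a b).sum_comp F).symm

lemma extOp_append_apply {m b : ℕ} (X : Mat d m) (f g : Fin m → Fin d) (s t : Fin b → Fin d) :
    extOp (Nat.le_add_right m b) X (Fin.append f s) (Fin.append g t)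
      = if s = t then X f g else 0 := by
  have hcond : (∀ i : Fin (m + b), m ≤ (i : ℕ) → Fin.append f s i = Fin.append g t i) ↔ s = t := by
    constructor
    · intro h
      funext j
      simpa using h (Fin.natAdd m j) (by simp)
    · rintro rfl i hi
      induction i using Fin.addCases with
      | left i => exact absurd hi (by simp)
      | right j => simp
  simp only [extOp, Matrix.of_apply, hcond]
  exact if_congr Iff.rfl (congrArg₂ X (funext (Fin.append_left f s)) (funext (Fin.append_left g t)))
    rfl

lemma ptraceLast_smul {a b : ℕ} (c : ℂ) (X : Mat d (a + b)) :
    ptraceLast a b (c • X) = c • ptraceLast a b X := by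
  ext f g
  simp [ptraceLast_apply, Finset.mul_sum]

lemma ptraceLast_sum {a b : ℕ} {ι : Type*} (s : Finset ι) (X : ι → Mat d (a + b)) :
    ptraceLast a b (∑ i ∈ s, X i) = ∑ i ∈ s, ptraceLast a b (X i) := by
  ext f g
  simp only [ptraceLast_apply, Matrix.sum_apply]
  exact Finset.sum_comm

lemma trace_ptraceLast {a b : ℕ} (X : Mat d (a + b)) :
    (ptraceLast a b X).trace = X.trace := by
  simp [Matrix.trace, ptraceLast_apply, sum_fun_append (fun H => X H H)]

lemma ptraceLast_extOp_mul {a b : ℕ} (X : Mat d a) (Z : Mat d (a + b)) :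
    ptraceLast a b (extOp (Nat.le_add_right a b) X * Z) = X * ptraceLast a b Z := by
  ext f g
  simp only [ptraceLast_apply, Matrix.mul_apply, sum_fun_append, extOp_append_apply, ite_mul,
    zero_mul, Finset.sum_ite_eq, Finset.mem_univ, if_true, Finset.mul_sum]
  rw [Finset.sum_comm]

lemma ptraceLast_mul_extOp {a b : ℕ} (Z : Mat d (a + b)) (Y : Mat d a) :
    ptraceLast a b (Z * extOp (Nat.le_add_right a b) Y) = ptraceLast a b Z * Y := by
  ext f g
  simp only [ptraceLast_apply, Matrix.mul_apply, sum_fun_append, extOp_append_apply, mul_ite,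
    mul_zero, Finset.sum_ite_eq', Finset.mem_univ, if_true, Finset.sum_mul]
  rw [Finset.sum_comm]

end PartialTrace

section FunctionUpdate

variable {ι α : Type*} [DecidableEq ι]

lemma eq_update_update_iff (F H : ι → α) (r s : ι) (c : α) :
    H = Function.update (Function.update F r c) s c
      ↔ H r = c ∧ H s = c ∧ ∀ t, t ≠ r → t ≠ s → H t = F t := by
  rw [funext_iff]
  refine ⟨fun h => ⟨?_, by simp [h s], fun t htr hts => by simp [h t, htr, hts]⟩,
    fun ⟨hr, hs, h⟩ t => ?_⟩
  · rw [h r]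
    by_cases hrs : r = s <;> simp [hrs]
  · by_cases hts : t = s
    · simp [hts, hs]
    by_cases htr : t = r
    · rw [htr] at hts ⊢
      simp [hr, Function.update_of_ne hts]
    · simp [htr, hts, h t htr hts]

lemma forall_pairs_update_update_iff {l : List (ι × ι)} {p : ι × ι}
    (hp : p.1 ≠ p.2) (hp1 : ∀ q ∈ l, p.1 ≠ q.1 ∧ p.1 ≠ q.2) (hp2 : ∀ q ∈ l, p.2 ≠ q.1 ∧ p.2 ≠ q.2)
    (F G : ι → α) (c : α) :
    ((∀ q ∈ l, Function.update (Function.update F p.1 c) p.2 c q.1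
          = Function.update (Function.update F p.1 c) p.2 c q.2 ∧ G q.1 = G q.2) ∧
        ∀ t, (∀ q ∈ l, t ≠ q.1 ∧ t ≠ q.2) →
          Function.update (Function.update F p.1 c) p.2 c t = G t) ↔
      G p.1 = c ∧ G p.2 = c ∧ (∀ q ∈ l, F q.1 = F q.2 ∧ G q.1 = G q.2) ∧
        (∀ t, t ≠ p.1 → t ≠ p.2 → (∀ q ∈ l, t ≠ q.1 ∧ t ≠ q.2) → F t = G t) := by
  have hU : ∀ t, t ≠ p.1 → t ≠ p.2 → Function.update (Function.update F p.1 c) p.2 c t = F t :=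
    fun t h1 h2 => by simp [Function.update_of_ne, h1, h2]
  have hUp1 : Function.update (Function.update F p.1 c) p.2 c p.1 = c := by
    simp [Function.update_of_ne hp]
  have hUq : ∀ q ∈ l, Function.update (Function.update F p.1 c) p.2 c q.1 = F q.1 ∧
      Function.update (Function.update F p.1 c) p.2 c q.2 = F q.2 := fun q hq =>
    ⟨hU _ (Ne.symm (hp1 q hq).1) (Ne.symm (hp2 q hq).1),
      hU _ (Ne.symm (hp1 q hq).2) (Ne.symm (hp2 q hq).2)⟩
  constructor
  · rintro ⟨h1, h2⟩
    refine ⟨?_, ?_, fun q hq => ?_, fun t ht1 ht2 htl => ?_⟩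
    · rw [← h2 p.1 hp1, hUp1]
    · rw [← h2 p.2 hp2, Function.update_self]
    · rw [← (hUq q hq).1, ← (hUq q hq).2]
      exact h1 q hq
    · rw [← hU t ht1 ht2]
      exact h2 t htl
  · rintro ⟨hc1, hc2, h1, h2⟩
    refine ⟨fun q hq => ?_, fun t htl => ?_⟩
    · rw [(hUq q hq).1, (hUq q hq).2]
      exact h1 q hq
    by_cases ht1 : t = p.1
    · rw [ht1, hUp1, hc1]
    by_cases ht2 : t = p.2
    · rw [ht2, Function.update_self, hc2]
    rw [hU t ht1 ht2]
    exact h2 t ht1 ht2 htl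

end FunctionUpdate

section MaximallyEntangled

variable {d n : ℕ}

lemma Pplus_mul_apply (r s : Fin n) (M : Mat d n) (F G : Fin n → Fin d) :
    (Pplus d n r s * M) F G = if F r = F s then
      (d : ℂ)⁻¹ * ∑ c, M (Function.update (Function.update F r c) s c) G else 0 := by
  have hsum : ∀ H, (∑ c, if H = Function.update (Function.update F r c) s c then 1 else 0)
      = if H r = H s ∧ ∀ t, t ≠ r → t ≠ s → F t = H t then (1 : ℂ) else 0 := by
    intro H
    simp only [eq_update_update_iff, ite_and, Finset.sum_ite_eq, Finset.mem_univ, if_true,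
      eq_comm (a := H s), eq_comm (a := F _)]
  rw [Matrix.mul_apply]
  split_ifs with hF
  · simp only [Pplus, Matrix.of_apply, hF, true_and, one_div]
    calc _ = ∑ H, (d : ℂ)⁻¹ * ((∑ c, if H = Function.update (Function.update F r c) s c
              then 1 else 0) * M H G) := by
          refine Finset.sum_congr rfl fun H _ => ?_
          rw [hsum]
          split_ifs <;> simp
      _ = _ := by
          rw [← Finset.mul_sum]
          simp_rw [Finset.sum_mul, boole_mul]
          rw [Finset.sum_comm]
          simp
  · simp [Pplus, hF]

lemma list_prod_Pplus_apply (l : List (Fin n × Fin n))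
    (hl : (l.flatMap fun p => [p.1, p.2]).Nodup) (F G : Fin n → Fin d) :
    (l.map fun p => Pplus d n p.1 p.2).prod F G =
      if (∀ p ∈ l, F p.1 = F p.2 ∧ G p.1 = G p.2) ∧
          ∀ t, (∀ p ∈ l, t ≠ p.1 ∧ t ≠ p.2) → F t = G t
      then (d : ℂ)⁻¹ ^ l.length else 0 := by
  induction l generalizing F with
  | nil => simp [Matrix.one_apply, funext_iff]
  | cons p l ih =>
    simp only [List.flatMap_cons, List.cons_append, List.nodup_cons, List.mem_cons,
      List.mem_flatMap, List.not_mem_nil, List.nil_append, not_or, not_exists, not_and,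
      not_false_eq_true, and_true] at hl
    obtain ⟨⟨hp, hp1⟩, hp2, hl⟩ := hl
    rw [List.map_cons, List.prod_cons, Pplus_mul_apply]
    simp_rw [ih hl]
    simp only [forall_pairs_update_update_iff hp hp1 hp2, ite_and, Finset.sum_ite_eq,
      Finset.mem_univ, if_true, List.forall_mem_cons, List.length_cons, pow_succ, and_imp,
      eq_comm (a := G p.2), and_assoc]
    split_ifs <;> ring

end MaximallyEntangled

section Vk

variable {d a k : ℕ}

/-- The pairs of factors joined by `V^{(k)}`: `a + j` and `a + 2k - 1 - j`, for `j < k`. -/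
def vkPairs (a k : ℕ) : List (Fin (a + k + k) × Fin (a + k + k)) :=
  (List.finRange k).map fun j => (Fin.castAdd k (Fin.natAdd a j), Fin.natAdd (a + k) j.rev)

lemma Vk_eq_list_prod : Vk d a k =
    (d : ℂ) ^ k • ((vkPairs a k).map fun p => Pplus d (a + k + k) p.1 p.2).prod := by
  rw [Vk, vkPairs, List.map_map]
  congr 3
  funext j
  simp only [Function.comp_apply]
  congr 1
  ext
  simp
  omega

lemma nodup_flatMap_vkPairs : ((vkPairs a k).flatMap fun p => [p.1, p.2]).Nodup := by
  rw [vkPairs, List.flatMap_map, List.nodup_flatMap]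
  refine ⟨fun j _ => ?_, (List.nodup_finRange k).imp fun {i j} hij => ?_⟩
  · simp [Fin.ext_iff]
    omega
  · simp [Fin.ext_iff]
    omega

lemma Vk_apply (hd : d ≠ 0) (F G : Fin (a + k + k) → Fin d) :
    Vk d a k F G =
      if (∀ j : Fin k, F (Fin.castAdd k (Fin.natAdd a j)) = F (Fin.natAdd (a + k) j.rev) ∧
            G (Fin.castAdd k (Fin.natAdd a j)) = G (Fin.natAdd (a + k) j.rev)) ∧
          ∀ i : Fin a, F (Fin.castAdd k (Fin.castAdd k i)) = G (Fin.castAdd k (Fin.castAdd k i))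
      then 1 else 0 := by
  have huncovered : ∀ t : Fin (a + k + k),
      (∀ j : Fin k, t ≠ Fin.castAdd k (Fin.natAdd a j) ∧ t ≠ Fin.natAdd (a + k) j.rev)
        ↔ (t : ℕ) < a := by
    intro t
    simp only [ne_eq, Fin.ext_iff, Fin.val_castAdd, Fin.val_natAdd, Fin.val_rev]
    refine ⟨fun h => ?_, fun h j => by omega⟩
    by_contra hta
    by_cases htk : (t : ℕ) < a + k
    · exact (h ⟨t - a, by omega⟩).1 (by simp; omega)
    · exact (h ⟨a + k + k - 1 - t, by omega⟩).2 (by simp; omega)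
  have hoff : (∀ t, (∀ j : Fin k,
        t ≠ Fin.castAdd k (Fin.natAdd a j) ∧ t ≠ Fin.natAdd (a + k) j.rev) → F t = G t) ↔
      ∀ i : Fin a, F (Fin.castAdd k (Fin.castAdd k i)) = G (Fin.castAdd k (Fin.castAdd k i)) := by
    simp only [huncovered]
    exact ⟨fun h i => h _ i.isLt, fun h t ht => h ⟨t, ht⟩⟩
  rw [Vk_eq_list_prod, Matrix.smul_apply, list_prod_Pplus_apply _ nodup_flatMap_vkPairs]
  simp only [vkPairs, List.forall_mem_map, List.mem_finRange, true_implies, hoff, List.length_map,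
    List.length_finRange, smul_eq_mul]
  split_ifs <;> simp [hd]

lemma ptraceLast_Vk (hd : d ≠ 0) : ptraceLast (a + k) k (Vk d a k) = 1 := by
  ext f g
  have hcond : ∀ s : Fin k → Fin d,
      ((∀ j, f (Fin.natAdd a j) = s j.rev ∧ g (Fin.natAdd a j) = s j.rev) ∧
          ∀ i, f (Fin.castAdd k i) = g (Fin.castAdd k i))
        ↔ s = (fun j => f (Fin.natAdd a j.rev)) ∧ f = g := by
    intro s
    refine ⟨fun ⟨h1, h2⟩ => ⟨funext fun j => ?_, funext fun i => ?_⟩, ?_⟩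
    · simpa using (h1 j.rev).1.symm
    · induction i using Fin.addCases with
      | left i => exact h2 i
      | right j => exact (h1 j).1.trans (h1 j).2.symm
    · rintro ⟨rfl, rfl⟩
      simp
  simp only [ptraceLast_apply, Vk_apply hd, Fin.append_left, Fin.append_right, hcond, ite_and,
    Finset.sum_ite_eq', Finset.mem_univ, if_true, Matrix.one_apply]

lemma ptraceLast_extOp_mul_Vk_mul_extOp (hd : d ≠ 0) (X Y : Mat d (a + k)) :
    ptraceLast (a + k) k
      (extOp (Nat.le_add_right (a + k) k) X * Vk d a k * extOp (Nat.le_add_right (a + k) k) Y)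
      = X * Y := by
  rw [mul_assoc, ptraceLast_extOp_mul, ptraceLast_mul_extOp, ptraceLast_Vk hd, one_mul]

end Vk

lemma ptraceLast_Fop_self {d a k : ℕ} (hd : d ≠ 0) {Φ : IrrepFamily a} {e : ℕ}
    (P : PRIRData a k Φ e) (r : P.Path) (i : Fin e) :
    ptraceLast (a + k) k (Fop d a k Φ P P r r i i)
      = ((multSW d a (Φ.rep (P.endOf r)) / multSW d (a + k) P.rep : ℝ) : ℂ) •
          (Eop d (a + k) P.rep i (P.basis ⟨r, ⟨0, Φ.dim_pos _⟩⟩) *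
            Eop d (a + k) P.rep (P.basis ⟨r, ⟨0, Φ.dim_pos _⟩⟩) i) := by
  rw [Fop, ptraceLast_smul, ptraceLast_extOp_mul_Vk_mul_extOp hd,
    Real.sqrt_mul_self (multSW_nonneg P.irrep)]

lemma ptraceLast_Fproj {d a k : ℕ} (hd : d ≠ 0) {Φ : IrrepFamily a} {e : ℕ}
    (P : PRIRData a k Φ e) (α : Φ.Label) :
    ptraceLast (a + k) k (Fproj d a k Φ P α)
      = (((P.pathMult α : ℝ) * (multSW d a (Φ.rep α) / multSW d (a + k) P.rep) : ℝ) : ℂ) •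
          Pop d (a + k) P.rep := by
  have hpath : ∀ r : {r : P.Path // P.endOf r = α},
      ∑ i, ptraceLast (a + k) k (Fop d a k Φ P P r.1 r.1 i i)
        = ((multSW d a (Φ.rep α) / multSW d (a + k) P.rep : ℝ) : ℂ) • Pop d (a + k) P.rep := by
    intro r
    simp only [ptraceLast_Fop_self hd, ← Finset.smul_sum, sum_Eop_mul_Eop P.irrep]
    rw [r.2]
  simp only [Fproj, ptraceLast_sum, hpath, Finset.sum_const, Finset.card_univ]
  rw [← Nat.cast_smul_eq_nsmul ℂ, smul_smul, PRIRData.pathMult]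
  push_cast
  rfl

theorem statement_16_general (d a k : ℕ) (hd : 2 ≤ d)
    (Φ : IrrepFamily a) (e : ℕ) (P : PRIRData a k Φ e) (α : Φ.Label)
    (hμ : multSW d (a + k) P.rep ≠ 0) :
    ptraceLast (a + k) k (Fproj d a k Φ P α)
      = (((P.pathMult α : ℝ) *
            (multSW d a (Φ.rep α) / multSW d (a + k) P.rep) : ℝ) : ℂ) •
          Pop d (a + k) P.rep
    ∧ Matrix.trace (Fproj d a k Φ P α)
      = (((P.pathMult α : ℝ) * multSW d a (Φ.rep α) * (e : ℝ) : ℝ) : ℂ) := by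
  have hpartial := ptraceLast_Fproj (by omega : d ≠ 0) P α
  refine ⟨hpartial, ?_⟩
  rw [← trace_ptraceLast, hpartial, Matrix.trace_smul, trace_Pop P.irrep, smul_eq_mul,
    ← Complex.ofReal_mul]
  congr 1
  field_simp

/-- `tr_{(k)}(F_μ(α)) = m_{μ/α}·(m_α/m_μ)·P_μ` (partial trace over
factors `n-2k+1,…,n-k`, `P_μ` on the first `n-k = a+k` factors); consequently
`tr F_μ(α) = m_{μ/α}·m_α·d_μ`. -/
theorem statement_16 (d a k : ℕ) (hd : 2 ≤ d) (hk : 1 ≤ k) (hka : k ≤ a)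
    (hN : 2 ≤ a + k)
    (Φ : IrrepFamily a) (e : ℕ) (P : PRIRData a k Φ e) (α : Φ.Label)
    (hα : multSW d a (Φ.rep α) ≠ 0)
    (hμ : multSW d (a + k) P.rep ≠ 0)
    (hin : 0 < P.pathMult α) :
    ptraceLast (a + k) k (Fproj d a k Φ P α)
      = (((P.pathMult α : ℝ) *
            (multSW d a (Φ.rep α) / multSW d (a + k) P.rep) : ℝ) : ℂ) •
          Pop d (a + k) P.rep
    ∧ Matrix.trace (Fproj d a k Φ P α)
      = (((P.pathMult α : ℝ) * multSW d a (Φ.rep α) * (e : ℝ) : ℝ) : ℂ) :=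
  statement_16_general d a k hd Φ e P α hμ
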